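/- arXiv:2008.02407 — 4 statements merged into one kernel-verified Lean document; each statement's English description precedes it below -/
import Mathlib

section
/- Let n ≥ 1 be an integer, 0 < ε < 1, let f : ℝ → ℝ be continuous, and let M ≥ 0 satisfy |f(s)| ≤ M for all s ∈ [1−ε, 1]. Define K[f](r) = (r^n/(2n))·∫_r^1 s^{1−n} f(s) ds + (r^{−n}/(2n))·∫_{1−ε}^r s^{n+1} f(s) ds. Then for every r ∈ [1−ε, 1], |K[f](r)| ≤ min(ε/(2n), 1/n²)·M. -/
open intervalIntegral

lemma zpow_anti_base' {a b : ℝ} (ha : 0 < a) (hab : a ≤ b) {m : ℤ} (hm : m ≤ 0) :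
    b ^ m ≤ a ^ m := by
  obtain ⟨k, rfl⟩ := Int.exists_eq_neg_ofNat hm
  rw [zpow_neg, zpow_neg, zpow_natCast, zpow_natCast]
  exact inv_anti₀ (pow_pos ha k) (pow_le_pow_left₀ ha.le hab k)

lemma zpow_mono_base' {a b : ℝ} (ha : 0 ≤ a) (hab : a ≤ b) {m : ℤ} (hm : 0 ≤ m) :
    a ^ m ≤ b ^ m := by
  lift m to ℕ using hm
  rw [zpow_natCast, zpow_natCast]
  exact pow_le_pow_left₀ ha hab m

lemma sub_pow_le' (n : ℕ) (hn : 1 ≤ n) (r : ℝ) (h0 : 0 ≤ r) (h1 : r ≤ 1) :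
    r - r ^ n ≤ ((n : ℝ) - 1) / n := by
  have hn' : (1:ℝ) ≤ n := by exact_mod_cast hn
  have hpos : (0:ℝ) < n := by linarith
  rw [le_div_iff₀ hpos]
  rcases le_or_gt r (((n:ℝ)-1)/n) with h | h
  · rw [le_div_iff₀ hpos] at h
    nlinarith [pow_nonneg h0 n]
  · have hb := one_add_mul_le_pow (show (-2:ℝ) ≤ r - 1 by linarith) n
    rw [add_sub_cancel] at hb
    rw [div_lt_iff₀ hpos] at h
    nlinarith [mul_le_mul_of_nonneg_left hb hpos.le, h, hn',
      mul_nonneg (sub_nonneg.2 hn') (sub_nonneg.2 h1)]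

/-- Sup-norm estimate for the kernel `K[f]`, first estimate in (4.17) of Lemma 4.2. -/
theorem stmt3 (n : ℕ) (hn : 1 ≤ n) (ε : ℝ) (hε0 : 0 < ε) (hε1 : ε < 1)
    (f : ℝ → ℝ) (hf : Continuous f) (M : ℝ) (hM : 0 ≤ M)
    (hfM : ∀ s ∈ Set.Icc (1 - ε) 1, |f s| ≤ M) :
    ∀ r ∈ Set.Icc (1 - ε) (1 : ℝ),
      |r ^ (n : ℤ) / (2 * n) * (∫ s in r..1, s ^ (1 - (n : ℤ)) * f s)
        + r ^ (-(n : ℤ)) / (2 * n) * ∫ s in (1 - ε)..r, s ^ ((n : ℤ) + 1) * f s|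
        ≤ min (ε / (2 * n)) (1 / (n : ℝ) ^ 2) * M := by
  intro r hr
  obtain ⟨hra, hrb⟩ := hr
  have hε' : 0 < 1 - ε := by linarith
  have hr0 : 0 < r := lt_of_lt_of_le hε' hra
  have hne : r ≠ 0 := hr0.ne'
  have hn1 : (1:ℝ) ≤ n := by exact_mod_cast hn
  have hn0 : (0:ℝ) < n := by linarith
  have e1 : r ^ (n:ℤ) * r ^ (1-(n:ℤ)) = r := by
    rw [← zpow_add₀ hne]; norm_num
  have e2 : r ^ (-(n:ℤ)) * r ^ ((n:ℤ)+1) = r := by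
    rw [← zpow_add₀ hne]; norm_num
  have e3 : r ^ (-(n:ℤ)) * r ^ ((n:ℤ)+2) = r^2 := by
    rw [← zpow_add₀ hne, show -(n:ℤ) + ((n:ℤ)+2) = 2 by ring, zpow_two, sq]
  have hc1 : 0 ≤ r ^ (n:ℤ) / (2*(n:ℝ)) := by positivity
  have hc2 : 0 ≤ r ^ (-(n:ℤ)) / (2*(n:ℝ)) := by positivity
  -- constant bounds on the integrals
  have hI1 : |∫ s in r..1, s ^ (1 - (n:ℤ)) * f s| ≤ r ^ (1-(n:ℤ)) * M * |1 - r| := by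
    rw [← Real.norm_eq_abs]
    apply intervalIntegral.norm_integral_le_of_norm_le_const
    intro x hx
    rw [Set.uIoc_of_le hrb] at hx
    have hx0 : 0 < x := hr0.trans hx.1
    rw [Real.norm_eq_abs, abs_mul, abs_of_nonneg (zpow_nonneg hx0.le _)]
    exact mul_le_mul (zpow_anti_base' hr0 hx.1.le (by omega))
      (hfM x ⟨by linarith [hx.1], hx.2⟩) (abs_nonneg _) (zpow_nonneg hr0.le _)
  have hI2 : |∫ s in (1-ε)..r, s ^ ((n:ℤ)+1) * f s| ≤ r ^ ((n:ℤ)+1) * M * |r - (1-ε)| := by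
    rw [← Real.norm_eq_abs]
    apply intervalIntegral.norm_integral_le_of_norm_le_const
    intro x hx
    rw [Set.uIoc_of_le hra] at hx
    have hx0 : 0 < x := hε'.trans hx.1
    rw [Real.norm_eq_abs, abs_mul, abs_of_nonneg (zpow_nonneg hx0.le _)]
    exact mul_le_mul (zpow_mono_base' hx0.le hx.2 (by omega))
      (hfM x ⟨hx.1.le, le_trans hx.2 hrb⟩) (abs_nonneg _) (zpow_nonneg hr0.le _)
  -- first bound: ≤ ε/(2n) * M
  have bound1 : |r ^ (n : ℤ) / (2 * n) * (∫ s in r..1, s ^ (1 - (n : ℤ)) * f s)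
        + r ^ (-(n : ℤ)) / (2 * n) * ∫ s in (1 - ε)..r, s ^ ((n : ℤ) + 1) * f s|
        ≤ ε / (2 * n) * M := by
    calc |r ^ (n : ℤ) / (2 * n) * (∫ s in r..1, s ^ (1 - (n : ℤ)) * f s)
        + r ^ (-(n : ℤ)) / (2 * n) * ∫ s in (1 - ε)..r, s ^ ((n : ℤ) + 1) * f s|
        ≤ |r ^ (n : ℤ) / (2 * n) * (∫ s in r..1, s ^ (1 - (n : ℤ)) * f s)|
          + |r ^ (-(n : ℤ)) / (2 * n) * ∫ s in (1 - ε)..r, s ^ ((n : ℤ) + 1) * f s| :=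
        abs_add_le _ _
      _ = r ^ (n:ℤ) / (2*(n:ℝ)) * |∫ s in r..1, s ^ (1 - (n:ℤ)) * f s|
          + r ^ (-(n:ℤ)) / (2*(n:ℝ)) * |∫ s in (1-ε)..r, s ^ ((n:ℤ)+1) * f s| := by
        rw [abs_mul, abs_mul, abs_of_nonneg hc1, abs_of_nonneg hc2]
      _ ≤ r ^ (n:ℤ) / (2*(n:ℝ)) * (r ^ (1-(n:ℤ)) * M * |1 - r|)
          + r ^ (-(n:ℤ)) / (2*(n:ℝ)) * (r ^ ((n:ℤ)+1) * M * |r - (1-ε)|) := by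
        gcongr
      _ = (r ^ (n:ℤ) * r ^ (1-(n:ℤ))) * M * (1 - r) / (2*(n:ℝ))
          + (r ^ (-(n:ℤ)) * r ^ ((n:ℤ)+1)) * M * (r - (1-ε)) / (2*(n:ℝ)) := by
        rw [abs_of_nonneg (by linarith : (0:ℝ) ≤ 1 - r),
          abs_of_nonneg (by linarith : (0:ℝ) ≤ r - (1-ε))]
        ring
      _ = r * M * ε / (2*(n:ℝ)) := by rw [e1, e2]; ring
      _ ≤ 1 * M * ε / (2*(n:ℝ)) := by gcongr
      _ = ε / (2 * n) * M := by ring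
  rw [min_mul_of_nonneg _ _ hM]
  refine le_min_iff.mpr ⟨bound1, ?_⟩
  -- second bound: ≤ 1/n² * M
  rcases eq_or_lt_of_le hn1 with h1 | h2
  · -- n = 1 : follows from the first bound since ε/2 ≤ 1
    refine bound1.trans ?_
    rw [← h1]
    nlinarith
  · -- n ≥ 2
    have hn2' : 2 ≤ n := by exact_mod_cast h2
    have hn2 : (2:ℝ) ≤ n := by exact_mod_cast hn2'
    have hmem : (0:ℝ) ∉ Set.uIcc r 1 := by
      rw [Set.uIcc_of_le hrb]
      rintro ⟨h, -⟩; linarith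
    have hmem2 : (0:ℝ) ∉ Set.uIcc (1-ε) r := by
      rw [Set.uIcc_of_le hra]
      rintro ⟨h, -⟩; linarith
    -- refined bound on the first integral
    have hI1' : |∫ s in r..1, s ^ (1 - (n:ℤ)) * f s|
        ≤ M * ((r ^ (1-(n:ℤ)) - 1) / ((n:ℝ) - 1)) := by
      have hint : IntervalIntegrable (fun t : ℝ => M * t ^ (-(n:ℤ)))
          MeasureTheory.volume r 1 :=
        (intervalIntegrable_zpow (Or.inr hmem)).const_mul M
      have hae : ∀ᵐ t ∂MeasureTheory.volume.restrict (Set.uIoc r 1),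
          ‖t ^ (1 - (n:ℤ)) * f t‖ ≤ M * t ^ (-(n:ℤ)) := by
        filter_upwards [MeasureTheory.ae_restrict_mem measurableSet_uIoc] with t ht
        rw [Set.uIoc_of_le hrb] at ht
        have ht0 : 0 < t := hr0.trans ht.1
        rw [Real.norm_eq_abs, abs_mul, abs_of_nonneg (zpow_nonneg ht0.le _)]
        calc t ^ (1-(n:ℤ)) * |f t| ≤ t ^ (-(n:ℤ)) * M := by
              exact mul_le_mul (zpow_le_zpow_right_of_le_one₀ ht0 ht.2 (by omega))
                (hfM t ⟨by linarith [ht.1], ht.2⟩) (abs_nonneg _) (zpow_nonneg ht0.le _)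
          _ = M * t ^ (-(n:ℤ)) := mul_comm _ _
      have hval : (∫ t in r..1, M * t ^ (-(n:ℤ)))
          = M * ((1 - r ^ (-(n:ℤ)+1)) / ((-(n:ℤ)+1 : ℤ) : ℝ)) := by
        rw [intervalIntegral.integral_const_mul, integral_zpow (Or.inr ⟨by omega, hmem⟩)]
        norm_num
      have hle := intervalIntegral.norm_integral_le_abs_of_norm_le hae hint
      rw [Real.norm_eq_abs, hval] at hle
      refine hle.trans (le_of_eq ?_)
      have hexp : -(n:ℤ)+1 = 1 - (n:ℤ) := by ring
      have hd : ((-(n:ℤ)+1 : ℤ) : ℝ) = 1 - (n:ℝ) := by push_cast; ring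
      have hq : (1:ℝ) ≤ r ^ (1-(n:ℤ)) := by
        have h0 := zpow_le_zpow_right_of_le_one₀ hr0 hrb
          (show (1:ℤ)-(n:ℤ) ≤ 0 by omega)
        simpa using h0
      have hnn : 0 ≤ M * ((1 - r ^ (1-(n:ℤ))) / (1 - (n:ℝ))) := by
        apply mul_nonneg hM
        rw [div_nonneg_iff]
        right
        constructor <;> linarith
      rw [hd, hexp, abs_of_nonneg hnn,
        show (1 - r ^ (1-(n:ℤ)))/(1-(n:ℝ)) = (r ^ (1-(n:ℤ)) - 1)/((n:ℝ)-1) by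
          rw [show (1:ℝ) - r ^ (1-(n:ℤ)) = -(r ^ (1-(n:ℤ)) - 1) from by ring,
            show (1:ℝ)-(n:ℝ) = -((n:ℝ)-1) from by ring, neg_div_neg_eq]]
    -- refined bound on the second integral
    have hI2' : |∫ s in (1-ε)..r, s ^ ((n:ℤ)+1) * f s|
        ≤ M * (r ^ ((n:ℤ)+2) / ((n:ℝ) + 2)) := by
      have hint : IntervalIntegrable (fun t : ℝ => M * t ^ ((n:ℤ)+1))
          MeasureTheory.volume (1-ε) r :=
        (intervalIntegrable_zpow (Or.inl (show (0:ℤ) ≤ (n:ℤ)+1 by positivity))).const_mul M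
      have hae : ∀ᵐ t ∂MeasureTheory.volume.restrict (Set.uIoc (1-ε) r),
          ‖t ^ ((n:ℤ)+1) * f t‖ ≤ M * t ^ ((n:ℤ)+1) := by
        filter_upwards [MeasureTheory.ae_restrict_mem measurableSet_uIoc] with t ht
        rw [Set.uIoc_of_le hra] at ht
        have ht0 : 0 < t := hε'.trans ht.1
        rw [Real.norm_eq_abs, abs_mul, abs_of_nonneg (zpow_nonneg ht0.le _)]
        rw [mul_comm M _]
        exact mul_le_mul_of_nonneg_left (hfM t ⟨ht.1.le, ht.2.trans hrb⟩)
          (zpow_nonneg ht0.le _)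
      have hval : (∫ t in (1-ε)..r, M * t ^ ((n:ℤ)+1))
          = M * ((r ^ ((n:ℤ)+2) - (1-ε) ^ ((n:ℤ)+2)) / (((n:ℤ)+2 : ℤ) : ℝ)) := by
        rw [intervalIntegral.integral_const_mul,
          integral_zpow (Or.inl (show (0:ℤ) ≤ (n:ℤ)+1 by positivity)),
          show (n:ℤ)+1+1 = (n:ℤ)+2 from by ring]
        push_cast
        ring
      have hle := intervalIntegral.norm_integral_le_abs_of_norm_le hae hint
      rw [Real.norm_eq_abs, hval] at hle
      refine hle.trans ?_
      have hd : (((n:ℤ)+2 : ℤ) : ℝ) = (n:ℝ) + 2 := by push_cast; ring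
      rw [hd]
      have h1 : (0:ℝ) ≤ (1-ε) ^ ((n:ℤ)+2) := zpow_nonneg hε'.le _
      have h2 : (1-ε) ^ ((n:ℤ)+2) ≤ r ^ ((n:ℤ)+2) := zpow_mono_base' hε'.le hra (by omega)
      rw [abs_of_nonneg (by
        apply mul_nonneg hM
        apply div_nonneg (by linarith) (by linarith))]
      gcongr
      linarith
    -- assemble
    have hnat : r ^ ((n:ℤ)) = r ^ n := zpow_natCast r n
    have hkey : r - r ^ n ≤ ((n:ℝ) - 1) / n := sub_pow_le' n hn r hr0.le hrb
    calc |r ^ (n : ℤ) / (2 * n) * (∫ s in r..1, s ^ (1 - (n : ℤ)) * f s)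
        + r ^ (-(n : ℤ)) / (2 * n) * ∫ s in (1 - ε)..r, s ^ ((n : ℤ) + 1) * f s|
        ≤ |r ^ (n : ℤ) / (2 * n) * (∫ s in r..1, s ^ (1 - (n : ℤ)) * f s)|
          + |r ^ (-(n : ℤ)) / (2 * n) * ∫ s in (1 - ε)..r, s ^ ((n : ℤ) + 1) * f s| :=
        abs_add_le _ _
      _ = r ^ (n:ℤ) / (2*(n:ℝ)) * |∫ s in r..1, s ^ (1 - (n:ℤ)) * f s|
          + r ^ (-(n:ℤ)) / (2*(n:ℝ)) * |∫ s in (1-ε)..r, s ^ ((n:ℤ)+1) * f s| := by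
        rw [abs_mul, abs_mul, abs_of_nonneg hc1, abs_of_nonneg hc2]
      _ ≤ r ^ (n:ℤ) / (2*(n:ℝ)) * (M * ((r ^ (1-(n:ℤ)) - 1) / ((n:ℝ) - 1)))
          + r ^ (-(n:ℤ)) / (2*(n:ℝ)) * (M * (r ^ ((n:ℤ)+2) / ((n:ℝ) + 2))) := by
        gcongr
      _ = M * ((r ^ (n:ℤ) * r ^ (1-(n:ℤ)) - r ^ (n:ℤ)) / ((n:ℝ) - 1)) / (2*(n:ℝ))
          + M * ((r ^ (-(n:ℤ)) * r ^ ((n:ℤ)+2)) / ((n:ℝ) + 2)) / (2*(n:ℝ)) := by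
        ring
      _ = M * ((r - r ^ n) / ((n:ℝ) - 1)) / (2*(n:ℝ))
          + M * (r^2 / ((n:ℝ) + 2)) / (2*(n:ℝ)) := by
        rw [e1, e3, hnat]
      _ ≤ M * ((1:ℝ)/(n:ℝ)) / (2*(n:ℝ)) + M * ((1:ℝ)/(n:ℝ)) / (2*(n:ℝ)) := by
        have t1 : (r - r ^ n) / ((n:ℝ) - 1) ≤ 1/(n:ℝ) := by
          rw [div_le_div_iff₀ (by linarith) hn0]
          rw [le_div_iff₀ hn0] at hkey
          linarith
        have t2 : r^2 / ((n:ℝ) + 2) ≤ 1/(n:ℝ) := by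
          rw [div_le_div_iff₀ (by linarith) hn0]
          have hr2 : r^2 ≤ 1 := pow_le_one₀ hr0.le hrb
          nlinarith
        gcongr M * ?_ / (2*(n:ℝ)) + M * ?_ / (2*(n:ℝ))
      _ = 1 / (n:ℝ)^2 * M := by field_simp; ring
end

section
/- Let n ≥ 1 be an integer, 0 < ε < 1, let f : ℝ → ℝ be continuous, and let M ≥ 0 satisfy |f(s)| ≤ M for all s ∈ [1−ε, 1]. Then for every r ∈ [1−ε, 1], the quantity K[f]'(r) = (r^{n−1}/2)·∫_r^1 s^{1−n} f(s) ds − (r^{−n−1}/2)·∫_{1−ε}^r s^{n+1} f(s) ds satisfies |K[f]'(r)| ≤ min(ε/2, 1/n)·M. -/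
open intervalIntegral

set_option maxHeartbeats 2000000 in
/-- Sup-norm estimate for the derivative of the kernel `K[f]`, from (4.17) of Lemma 4.2. -/
theorem stmt4 (n : ℕ) (hn : 1 ≤ n) (ε : ℝ) (hε0 : 0 < ε) (hε1 : ε < 1)
    (f : ℝ → ℝ) (hf : Continuous f) (M : ℝ) (hM : 0 ≤ M)
    (hfM : ∀ s ∈ Set.Icc (1 - ε) 1, |f s| ≤ M) :
    ∀ r ∈ Set.Icc (1 - ε) (1 : ℝ),
      |r ^ ((n : ℤ) - 1) / 2 * (∫ s in r..1, s ^ (1 - (n : ℤ)) * f s)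
        - r ^ (-(n : ℤ) - 1) / 2 * ∫ s in (1 - ε)..r, s ^ ((n : ℤ) + 1) * f s|
        ≤ min (ε / 2) (1 / (n : ℝ)) * M := by
  obtain ⟨m, rfl⟩ : ∃ m, n = m + 1 := ⟨n - 1, (Nat.succ_pred_eq_of_pos hn).symm⟩
  rintro r ⟨hr1, hr2⟩
  have ha : (0:ℝ) < 1 - ε := by linarith
  have hr0 : (0:ℝ) < r := by linarith
  have e1 : r ^ (((m+1:ℕ) : ℤ) - 1) = r ^ m := by
    rw [show (((m+1:ℕ):ℤ) - 1) = (m:ℤ) by push_cast; ring, zpow_natCast]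
  have e2 : r ^ (-((m+1:ℕ) : ℤ) - 1) = (r ^ (m+2))⁻¹ := by
    rw [show (-((m+1:ℕ):ℤ) - 1) = -((m+2:ℕ):ℤ) by push_cast; ring, zpow_neg, zpow_natCast]
  have e3 : ∀ s : ℝ, s ^ (1 - ((m+1:ℕ) : ℤ)) = (s ^ m)⁻¹ := fun s => by
    rw [show (1 - ((m+1:ℕ):ℤ)) = -((m:ℕ):ℤ) by push_cast; ring, zpow_neg, zpow_natCast]
  have e4 : ∀ s : ℝ, s ^ (((m+1:ℕ) : ℤ) + 1) = s ^ (m+2) := fun s => by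
    rw [show (((m+1:ℕ):ℤ) + 1) = ((m+2:ℕ):ℤ) by push_cast; ring, zpow_natCast]
  simp only [e1, e2, e3, e4]
  have hrm : (0:ℝ) < r ^ m := pow_pos hr0 m
  have hrm2 : (0:ℝ) < r ^ (m+2) := pow_pos hr0 _
  set A := ∫ s in r..1, (s ^ m)⁻¹ * f s with hA
  set B := ∫ s in (1-ε)..r, s ^ (m+2) * f s with hB
  -- generic triangle-inequality combination
  have key : ∀ C₁ C₂ : ℝ, |A| ≤ C₁ → |B| ≤ C₂ →
      |r ^ m / 2 * A - (r ^ (m+2))⁻¹ / 2 * B| ≤ r ^ m / 2 * C₁ + (r ^ (m+2))⁻¹ / 2 * C₂ := by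
    intro C₁ C₂ h1 h2
    refine (abs_sub _ _).trans ?_
    rw [abs_mul, abs_mul, abs_of_pos (by positivity : (0:ℝ) < r ^ m / 2),
      abs_of_pos (by positivity : (0:ℝ) < (r ^ (m+2))⁻¹ / 2)]
    gcongr
  -- first bounds (constant pointwise bounds)
  have hA1 : |A| ≤ M / r ^ m * (1 - r) := by
    have h := intervalIntegral.norm_integral_le_of_norm_le_const
      (a := r) (b := 1) (C := M / r ^ m) (f := fun s => (s^m)⁻¹ * f s) ?_
    · rw [Real.norm_eq_abs] at h
      simpa [abs_of_nonneg (by linarith : (0:ℝ) ≤ 1 - r)] using h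
    · intro x hx
      rw [Set.uIoc_of_le hr2] at hx
      obtain ⟨hx1, hx2⟩ := hx
      have hx0 : 0 < x := lt_trans hr0 hx1
      rw [Real.norm_eq_abs, abs_mul, abs_inv, abs_pow, abs_of_pos hx0]
      have h1 : (x ^ m)⁻¹ ≤ (r ^ m)⁻¹ := by
        apply inv_anti₀ hrm (pow_le_pow_left₀ hr0.le hx1.le m)
      have h2 : |f x| ≤ M := hfM x ⟨by linarith, hx2⟩
      calc (x^m)⁻¹ * |f x| ≤ (r^m)⁻¹ * M :=
            mul_le_mul h1 h2 (abs_nonneg _) (by positivity)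
        _ = M / r^m := by ring
  have hB1 : |B| ≤ M * r ^ (m+2) * (r - (1-ε)) := by
    have h := intervalIntegral.norm_integral_le_of_norm_le_const
      (a := 1-ε) (b := r) (C := M * r ^ (m+2)) (f := fun s => s^(m+2) * f s) ?_
    · rw [Real.norm_eq_abs] at h
      simpa [abs_of_nonneg (by linarith : (0:ℝ) ≤ r - (1-ε))] using h
    · intro x hx
      rw [Set.uIoc_of_le hr1] at hx
      obtain ⟨hx1, hx2⟩ := hx
      have hx0 : 0 < x := lt_trans ha hx1
      rw [Real.norm_eq_abs, abs_mul, abs_pow, abs_of_pos hx0]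
      have h1 : x ^ (m+2) ≤ r ^ (m+2) := pow_le_pow_left₀ hx0.le hx2 _
      have h2 : |f x| ≤ M := hfM x ⟨hx1.le, by linarith⟩
      calc x^(m+2) * |f x| ≤ r^(m+2) * M :=
            mul_le_mul h1 h2 (abs_nonneg _) (by positivity)
        _ = M * r^(m+2) := by ring
  have bound1 : |r ^ m / 2 * A - (r ^ (m+2))⁻¹ / 2 * B| ≤ ε / 2 * M := by
    refine (key _ _ hA1 hB1).trans (le_of_eq ?_)
    field_simp
    ring
  -- second bound : ≤ M / (m+1)
  -- B-part: |B| ≤ M * r^(m+3)/(m+3)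
  have habsint : IntervalIntegrable (fun s : ℝ => |s^(m+2) * f s|) MeasureTheory.volume (1-ε) r :=
    (((continuous_pow (m+2)).mul hf).abs).intervalIntegrable _ _
  have hgint : IntervalIntegrable (fun s : ℝ => M * s^(m+2)) MeasureTheory.volume (1-ε) r :=
    (continuous_const.mul (continuous_pow _)).intervalIntegrable _ _
  have hB2 : |B| ≤ M * r / ((m:ℝ)+3) * r ^ (m+2) := by
    have step1 : |B| ≤ ∫ s in (1-ε)..r, |s^(m+2) * f s| := by
      have h := intervalIntegral.norm_integral_le_integral_norm
        (f := fun s => s^(m+2) * f s) (μ := MeasureTheory.volume) (a := 1-ε) (b := r) hr1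
      simp only [Real.norm_eq_abs] at h
      exact h
    have step2 : (∫ s in (1-ε)..r, |s^(m+2) * f s|) ≤ ∫ s in (1-ε)..r, M * s^(m+2) := by
      apply intervalIntegral.integral_mono_on hr1 habsint hgint
      intro x ⟨hx1, hx2⟩
      have hx0 : 0 < x := lt_of_lt_of_le ha hx1
      rw [abs_mul, abs_pow, abs_of_pos hx0]
      have h2 : |f x| ≤ M := hfM x ⟨hx1, by linarith⟩
      calc x^(m+2) * |f x| ≤ x^(m+2) * M := by
            exact mul_le_mul_of_nonneg_left h2 (by positivity)
        _ = M * x^(m+2) := by ring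
    have step3 : (∫ s in (1-ε)..r, M * s^(m+2)) = M * ((r^(m+3) - (1-ε)^(m+3)) / ((m:ℝ)+3)) := by
      rw [intervalIntegral.integral_const_mul, integral_pow]
      push_cast
      ring_nf
    have step4 : M * ((r^(m+3) - (1-ε)^(m+3)) / ((m:ℝ)+3)) ≤ M * r / ((m:ℝ)+3) * r^(m+2) := by
      have h2 : (0:ℝ) ≤ (1-ε)^(m+3) := by positivity
      have h4 : M * ((r^(m+3) - (1-ε)^(m+3)) / ((m:ℝ)+3)) ≤ M * (r^(m+3) / ((m:ℝ)+3)) := by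
        gcongr
        linarith
      refine h4.trans (le_of_eq ?_)
      rw [pow_succ]
      ring
    linarith
  -- A-side: |A| ≤ ∫ M (s^m)⁻¹  (used when m ≥ 1)
  have hcinv : ∀ j : ℕ, ContinuousOn (fun s : ℝ => (s ^ j)⁻¹) (Set.uIcc r 1) := by
    intro j
    apply ContinuousOn.inv₀ (continuous_pow j).continuousOn
    intro x hx
    rw [Set.uIcc_of_le hr2] at hx
    exact pow_ne_zero _ (ne_of_gt (lt_of_lt_of_le hr0 hx.1))
  have hAint : |A| ≤ ∫ s in r..1, M * (s ^ m)⁻¹ := by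
    have h := intervalIntegral.norm_integral_le_integral_norm
      (f := fun s => (s^m)⁻¹ * f s) (μ := MeasureTheory.volume) (a := r) (b := 1) hr2
    simp only [Real.norm_eq_abs] at h
    refine h.trans ?_
    apply intervalIntegral.integral_mono_on hr2
    · exact (((hcinv m).mul hf.continuousOn).abs).intervalIntegrable
    · exact (continuousOn_const.mul (hcinv m)).intervalIntegrable
    · intro x ⟨hx1, hx2⟩
      have hx0 : 0 < x := lt_of_lt_of_le hr0 hx1
      rw [abs_mul, abs_inv, abs_pow, abs_of_pos hx0]
      have h2 : |f x| ≤ M := hfM x ⟨by linarith, hx2⟩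
      calc (x^m)⁻¹ * |f x| ≤ (x^m)⁻¹ * M :=
            mul_le_mul_of_nonneg_left h2 (by positivity)
        _ = M * (x^m)⁻¹ := by ring
  have bound2 : |r ^ m / 2 * A - (r ^ (m+2))⁻¹ / 2 * B| ≤ 1 / ((m:ℝ)+1) * M := by
    match m, hAint, hB2, hA1, key with
    | 0, hAint, hB2, hA1, key =>
      refine (key _ _ hA1 hB2).trans ?_
      have e : r^0 / 2 * (M / r^0 * (1-r)) + (r^(0+2))⁻¹/2 * (M * r / (((0:ℕ):ℝ)+3) * r^(0+2))
          = M*(1-r)/2 + M*r/6 := by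
        push_cast
        field_simp
        ring
      rw [e]
      push_cast
      nlinarith [mul_nonneg hM hr0.le, mul_nonneg hM (by linarith : (0:ℝ) ≤ 1 - r)]
    | 1, hAint, hB2, hA1, key =>
      have hlog : ∫ s in r..1, M * (s ^ 1)⁻¹ ≤ M * (1/r - 1) := by
        rw [intervalIntegral.integral_const_mul]
        simp only [pow_one]
        rw [integral_inv (by rw [Set.uIcc_of_le hr2]; rintro ⟨h,_⟩; linarith)]
        have hlr : Real.log (1 / r) ≤ 1/r - 1 := Real.log_le_sub_one_of_pos (by positivity)
        exact mul_le_mul_of_nonneg_left hlr hM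
      refine (key _ _ (hAint.trans hlog) hB2).trans ?_
      have e : r^1 / 2 * (M * (1/r - 1)) + (r^(1+2))⁻¹/2 * (M * r / (((1:ℕ):ℝ)+3) * r^(1+2))
          = M*(1-r)/2 + M*r/8 := by
        push_cast
        field_simp
        ring
      rw [e]
      push_cast
      nlinarith [mul_nonneg hM hr0.le]
    | (k+2), hAint, hB2, hA1, key =>
      have hAval : ∫ s in r..1, M * (s ^ (k+2))⁻¹
          = M * (((r^(k+1))⁻¹ - 1)/((k:ℝ)+1)) := by
        rw [intervalIntegral.integral_const_mul]
        congr 1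
        have hzpow : ∀ s : ℝ, (s^(k+2))⁻¹ = s ^ (-((k:ℤ)+2)) := fun s => by
          rw [zpow_neg, show ((k:ℤ)+2) = ((k+2:ℕ):ℤ) by push_cast; ring, zpow_natCast]
        simp only [hzpow]
        rw [integral_zpow (Or.inr ⟨by omega, by rw [Set.uIcc_of_le hr2]; rintro ⟨h,_⟩; linarith⟩)]
        rw [show (-((k:ℤ)+2)+1) = -((k+1:ℕ):ℤ) by push_cast; ring]
        rw [zpow_neg, zpow_natCast, zpow_neg, zpow_natCast]
        simp only [one_pow, inv_one]
        push_cast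
        rw [div_eq_div_iff (by push_cast; nlinarith [Nat.cast_nonneg (α := ℝ) k]) (by nlinarith [Nat.cast_nonneg (α := ℝ) k])]
        ring
      set K : ℝ := (k : ℝ) with hK
      have hK0 : 0 ≤ K := Nat.cast_nonneg k
      have hq : 1 + ((k+2:ℕ):ℝ) * (r - 1) ≤ r ^ (k+2) := by
        have := one_add_mul_le_pow (a := r - 1) (by linarith) (k+2)
        simpa using this
      have hq' : 1 + (K+2) * (r-1) ≤ r^(k+2) := by
        push_cast at hq
        linarith
      have hq0 : (0:ℝ) ≤ r^(k+2) := by positivity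
      have hscalar : (r - r^(k+2))/(2*(K+1)) + r/(2*(K+5)) ≤ 1/(K+3) := by
        rw [div_add_div _ _ (by positivity) (by positivity), div_le_div_iff₀ (by positivity) (by positivity)]
        rcases le_or_gt (1 - r) (4/(K+3)^2) with hc | hc
        · have hc' : (1-r) * (K+3)^2 ≤ 4 := by
            rw [← le_div_iff₀ (by positivity)]
            exact hc
          nlinarith [mul_nonneg (mul_nonneg hK0 hK0) hK0, sq_nonneg K, mul_nonneg hK0 (sub_nonneg.2 hr2)]
        · have hc' : 8 ≤ 2*(K+3)^2*(1-r) := by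
            have h8 : 4 < (1-r)*(K+3)^2 := by
              rw [← div_lt_iff₀ (by positivity)]
              exact hc
            nlinarith
          nlinarith [mul_nonneg hq0 (by positivity : (0:ℝ) ≤ (K+3)*(K+5))]
      refine (key _ _ (hAint.trans (le_of_eq hAval)) hB2).trans ?_
      have hp : r^(k+1) ≠ 0 := by positivity
      have e : r^(k+2) / 2 * (M * (((r^(k+1))⁻¹ - 1)/(K+1)))
            + (r^(k+2+2))⁻¹/2 * (M * r / (((k+2:ℕ):ℝ)+3) * r^(k+2+2))
          = M * ((r - r^(k+2))/(2*(K+1)) + r/(2*(K+5))) := by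
        rw [hK]
        field_simp
        push_cast
        ring
      rw [e]
      have : M * ((r - r^(k+2))/(2*(K+1)) + r/(2*(K+5))) ≤ M * (1/(K+3)) :=
        mul_le_mul_of_nonneg_left hscalar hM
      refine this.trans (le_of_eq ?_)
      rw [hK]
      push_cast
      ring
  calc |r ^ m / 2 * A - (r ^ (m+2))⁻¹ / 2 * B|
      ≤ min (ε/2 * M) (1 / ((m:ℝ)+1) * M) := le_min bound1 bound2
    _ = min (ε/2) (1 / ((m:ℝ)+1)) * M := (min_mul_of_nonneg _ _ hM).symm
    _ = min (ε/2) (1 / (((m+1:ℕ)):ℝ)) * M := by push_cast; ring_nf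
end

section
/- Let 0 < ε < 1 and let f : ℝ → ℝ be continuous. Define K₀[f](r) = −∫_r^1 log(s/r)·s·f(s) ds for r > 0. Then K₀[f] is twice differentiable on (0, ∞), its derivative is K₀[f]'(r) = (1/r)·∫_r^1 s·f(s) ds, in particular K₀[f]'(1) = 0, and for every r > 0 it satisfies −K₀[f]''(r) − (1/r)·K₀[f]'(r) = f(r). -/
open intervalIntegral

/-- The `n = 0` kernel `K₀[f]` of Lemma 4.2 solves `-ψ'' - ψ'/r = f` with `ψ'(1) = 0`. -/
theorem stmt5 (ε : ℝ) (hε0 : 0 < ε) (hε1 : ε < 1)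
    (f : ℝ → ℝ) (hf : Continuous f) (K₀ : ℝ → ℝ)
    (hK : ∀ r : ℝ, 0 < r → K₀ r = -∫ s in r..1, Real.log (s / r) * s * f s) :
    (∀ r ∈ Set.Ioi (0 : ℝ), DifferentiableAt ℝ K₀ r) ∧
    (∀ r ∈ Set.Ioi (0 : ℝ), DifferentiableAt ℝ (deriv K₀) r) ∧
    (∀ r : ℝ, 0 < r → deriv K₀ r = (1 / r) * ∫ s in r..1, s * f s) ∧
    deriv K₀ 1 = 0 ∧
    (∀ r : ℝ, 0 < r → -(deriv (deriv K₀) r) - (1 / r) * deriv K₀ r = f r) := by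
  have hgc : Continuous fun s : ℝ => s * f s := continuous_id.mul hf
  have hint : ∀ x : ℝ, 0 < x →
      IntervalIntegrable (fun s => Real.log s * (s * f s)) MeasureTheory.volume x 1 := by
    intro x hx
    apply ContinuousOn.intervalIntegrable
    refine ContinuousOn.mul (Real.continuousOn_log.mono ?_) hgc.continuousOn
    intro s hs
    have h0 : 0 < s := lt_of_lt_of_le (lt_min hx one_pos) hs.1
    simpa using h0.ne'
  have hKeq : ∀ x : ℝ, 0 < x →
      K₀ x = -(∫ s in x..1, Real.log s * (s * f s)) + Real.log x * ∫ s in x..1, s * f s := by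
    intro x hx
    rw [hK x hx]
    have h1 : (∫ s in x..1, Real.log (s / x) * s * f s)
        = ∫ s in x..1, (Real.log s * (s * f s) - Real.log x * (s * f s)) := by
      apply intervalIntegral.integral_congr
      intro s hs
      have h0 : 0 < s := lt_of_lt_of_le (lt_min hx one_pos) hs.1
      show Real.log (s / x) * s * f s = _
      rw [Real.log_div h0.ne' hx.ne']
      ring
    rw [h1, intervalIntegral.integral_sub (g := fun s => Real.log x * (s * f s)) (hint x hx)
        ((continuous_const.mul hgc).intervalIntegrable _ _),
      intervalIntegral.integral_const_mul]
    ring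
  have hG : ∀ r : ℝ, HasDerivAt (fun u => ∫ s in u..1, s * f s) (-(r * f r)) r := by
    intro r
    exact intervalIntegral.integral_hasDerivAt_left (hgc.intervalIntegrable _ _)
      (hgc.stronglyMeasurable.stronglyMeasurableAtFilter) hgc.continuousAt
  have hd : ∀ r : ℝ, 0 < r →
      HasDerivAt K₀ ((1 / r) * ∫ s in r..1, s * f s) r := by
    intro r hr
    have hH : HasDerivAt (fun u => ∫ s in u..1, Real.log s * (s * f s))
        (-(Real.log r * (r * f r))) r := by
      refine intervalIntegral.integral_hasDerivAt_left (hint r hr)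
        ((Real.measurable_log.mul hgc.measurable).stronglyMeasurable.stronglyMeasurableAtFilter) ?_
      exact ((Real.continuousAt_log hr.ne').mul hgc.continuousAt)
    have hφ : HasDerivAt (fun u =>
        -(∫ s in u..1, Real.log s * (s * f s)) + Real.log u * ∫ s in u..1, s * f s)
        ((1 / r) * ∫ s in r..1, s * f s) r := by
      have h2 := ((Real.hasDerivAt_log hr.ne').mul (hG r))
      have h3 := hH.neg.add h2
      refine h3.congr_deriv ?_
      ring
    exact hφ.congr_of_eventuallyEq
      (Filter.eventuallyEq_of_mem (Ioi_mem_nhds hr) fun x hx => hKeq x hx)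
  have hderiv : ∀ r : ℝ, 0 < r → deriv K₀ r = (1 / r) * ∫ s in r..1, s * f s :=
    fun r hr => (hd r hr).deriv
  have hd2 : ∀ r : ℝ, 0 < r →
      HasDerivAt (deriv K₀) (-(r ^ 2)⁻¹ * (∫ s in r..1, s * f s) + r⁻¹ * (-(r * f r))) r := by
    intro r hr
    have h1 : HasDerivAt (fun x : ℝ => x⁻¹ * ∫ s in x..1, s * f s)
        (-(r ^ 2)⁻¹ * (∫ s in r..1, s * f s) + r⁻¹ * (-(r * f r))) r :=
      (hasDerivAt_inv hr.ne').mul (hG r)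
    refine h1.congr_of_eventuallyEq
      (Filter.eventuallyEq_of_mem (Ioi_mem_nhds hr) fun x hx => ?_)
    rw [hderiv x hx, one_div]
  refine ⟨fun r hr => (hd r hr).differentiableAt,
    fun r hr => (hd2 r hr).differentiableAt, hderiv, ?_, ?_⟩
  · rw [hderiv 1 one_pos, intervalIntegral.integral_same]; ring
  · intro r hr
    rw [(hd2 r hr).deriv, hderiv r hr]
    field_simp
    ring
end

section
/- Let n ≥ 1 be an integer and 0 < ε ≤ 1/5, and set x = 1 − ε. Define p(r) = ((1 − n²) / (x² · (x^n + x^{−n}))) · (r^n + r^{−n}). Then for every r ∈ [1−ε, 1], |p'(r)| ≤ 2·(n³ + 1). -/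
set_option maxHeartbeats 1000000 in
/-- Uniform bound `|p'(r)| ≤ 2(n³+1)` on `[1-ε, 1]` for the explicit pressure mode of
Lemma 4.5, valid for `0 < ε ≤ 1/5`. -/
theorem stmt14 (n : ℕ) (hn : 1 ≤ n) (ε : ℝ) (hε0 : 0 < ε) (hε1 : ε ≤ 1 / 5)
    (x : ℝ) (hx : x = 1 - ε)
    (p : ℝ → ℝ)
    (hp : p = fun r : ℝ =>
      (1 - (n : ℝ) ^ 2) / (x ^ 2 * (x ^ (n : ℤ) + x ^ (-(n : ℤ)))) *
        (r ^ (n : ℤ) + r ^ (-(n : ℤ)))) :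
    ∀ r ∈ Set.Icc (1 - ε) (1 : ℝ), |deriv p r| ≤ 2 * ((n : ℝ) ^ 3 + 1) := by
  subst hp
  intro r hr
  obtain ⟨hr1, hr2⟩ := hr
  have hx0 : (0:ℝ) < x := by rw [hx]; linarith
  have hx45 : (4:ℝ)/5 ≤ x := by rw [hx]; linarith
  have hxr : x ≤ r := by rw [hx]; exact hr1
  have hr0 : (0:ℝ) < r := lt_of_lt_of_le hx0 hxr
  set C : ℝ := (1 - (n : ℝ) ^ 2) / (x ^ 2 * (x ^ (n : ℤ) + x ^ (-(n : ℤ)))) with hC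
  have hd := ((hasDerivAt_zpow (n:ℤ) r (Or.inl hr0.ne')).add
      (hasDerivAt_zpow (-(n:ℤ)) r (Or.inl hr0.ne'))).const_mul C
  rw [show deriv (fun r => C * (r ^ (n:ℤ) + r ^ (-(n:ℤ)))) r = _ from hd.deriv]
  have e1 : ((n:ℤ) - 1) = ((n - 1 : ℕ) : ℤ) := by omega
  have e2 : (-(n:ℤ) - 1) = -((n + 1 : ℕ) : ℤ) := by push_cast; ring
  rw [e1, e2, zpow_neg, zpow_natCast, zpow_natCast]
  have hCrw : C = (1 - (n : ℝ) ^ 2) / (x ^ 2 * (x ^ n + (x ^ n)⁻¹)) := by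
    rw [hC, zpow_neg, zpow_natCast]
  have hxn : (0:ℝ) < x ^ n := pow_pos hx0 n
  have hxn1 : (0:ℝ) < x ^ (n+1) := pow_pos hx0 _
  have hrn1 : (0:ℝ) < r ^ (n+1) := pow_pos hr0 _
  have hA : (0:ℝ) < x ^ 2 * (x ^ n + (x ^ n)⁻¹) := by positivity
  have hn1 : (1:ℝ) ≤ (n:ℝ) := by exact_mod_cast hn
  have habsC : |C| = ((n:ℝ) ^ 2 - 1) / (x ^ 2 * (x ^ n + (x ^ n)⁻¹)) := by
    rw [hCrw, abs_div, abs_of_pos hA, abs_of_nonpos (by nlinarith)]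
    ring
  have hrpow1 : r ^ (n - 1) ≤ 1 := pow_le_one₀ hr0.le hr2
  have hinv1 : (1:ℝ) ≤ (r ^ (n+1))⁻¹ := by
    exact (one_le_inv₀ hrn1).mpr (pow_le_one₀ hr0.le hr2)
  have habs2 : |((n:ℤ):ℝ) * r ^ (n-1) + ((-(n:ℤ)):ℝ) * (r ^ (n+1))⁻¹|
      = (n:ℝ) * ((r ^ (n+1))⁻¹ - r ^ (n-1)) := by
    push_cast
    rw [abs_of_nonpos (by nlinarith)]
    ring
  rw [abs_mul]
  push_cast
  push_cast at habs2
  rw [habsC, habs2]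
  have step1 : ((n:ℝ) ^ 2 - 1) / (x ^ 2 * (x ^ n + (x ^ n)⁻¹))
      ≤ ((n:ℝ) ^ 2 - 1) / (x ^ 2 * (x ^ n)⁻¹) := by
    apply div_le_div_of_nonneg_left (by nlinarith) (by positivity)
    have h1 : (0:ℝ) < x ^ 2 := by positivity
    nlinarith
  have hrx : (r ^ (n+1))⁻¹ ≤ (x ^ (n+1))⁻¹ := by
    gcongr
  have step2 : (n:ℝ) * ((r ^ (n+1))⁻¹ - r ^ (n-1)) ≤ (n:ℝ) * (x ^ (n+1))⁻¹ := by
    have h2 : (0:ℝ) ≤ r ^ (n-1) := by positivity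
    nlinarith
  have hmain : ((n:ℝ) ^ 2 - 1) / (x ^ 2 * (x ^ n + (x ^ n)⁻¹))
        * ((n:ℝ) * ((r ^ (n+1))⁻¹ - r ^ (n-1)))
      ≤ ((n:ℝ) ^ 2 - 1) / (x ^ 2 * (x ^ n)⁻¹) * ((n:ℝ) * (x ^ (n+1))⁻¹) := by
    apply mul_le_mul step1 step2 ?_ ?_
    · nlinarith
    · apply div_nonneg (by nlinarith) (by positivity)
  refine hmain.trans ?_
  have hrw : ((n:ℝ) ^ 2 - 1) / (x ^ 2 * (x ^ n)⁻¹) * ((n:ℝ) * (x ^ (n+1))⁻¹)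
      = (n:ℝ) * ((n:ℝ) ^ 2 - 1) / x ^ 3 := by
    rw [pow_succ]
    field_simp
    ring
  rw [hrw]
  rw [div_le_iff₀ (by positivity)]
  have h3 : (64:ℝ)/125 ≤ x ^ 3 := by
    nlinarith [pow_le_pow_left₀ (by norm_num : (0:ℝ) ≤ 4/5) hx45 3]
  nlinarith [mul_le_mul_of_nonneg_left h3 (show (0:ℝ) ≤ 2*((n:ℝ)^3+1) by positivity), hn1]
end
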